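/- arXiv:2601.14491 — 5 statements merged into one kernel-verified Lean document; each statement's English description precedes it below -/
import Mathlib

section
/- Hermite's theorem: let p be a monic squarefree real polynomial of degree n with distinct complex roots z_1,...,z_n, and let q be a real polynomial. Then the signature of the real symmetric n×n matrix H_q with entries H_q[i,j] = ∑_{k=1}^n z_k^{i+j-2} q(z_k) equals N_+ − N_−, where N_+ = #{x ∈ ℝ : p(x) = 0, q(x) > 0} and N_− = #{x ∈ ℝ : p(x) = 0, q(x) < 0}. -/
/-!
With `V` the Vandermonde matrix of the roots, `H = Vᵀ * diagonal (q ∘ z) * V`: `H` is the real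
quadratic form `x ↦ ∑ₖ q(zₖ) (Vₖ x)²`. A real root contributes `q(zₖ) (Vₖ x)²`, the square of a
real linear form. A conjugate pair `z, z̄` contributes
`2 Re (q(z) (Vₖ x)²) = Re (u Vₖ x)² - Im (u Vₖ x)²` where `u² = 2 q(z)`, or nothing if `q(z) = 0`.
These `n` real linear forms are independent because `V` is invertible, so by Sylvester's law of
inertia the signature is the sum of `sign q(zₖ)` over the real roots, each conjugate pair
contributing `+1 - 1 = 0`.
-/

open Polynomial Matrix

/-- The signature of a real symmetric matrix: the number of positive eigenvalues
minus the number of negative eigenvalues (with multiplicity). -/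
noncomputable def signature {n : ℕ} (A : Matrix (Fin n) (Fin n) ℝ) : ℤ :=
  if h : A.IsHermitian then
    ((Finset.univ.filter fun i => 0 < h.eigenvalues i).card : ℤ) -
    ((Finset.univ.filter fun i => h.eigenvalues i < 0).card : ℤ)
  else 0

open ComplexConjugate

theorem Function.Involutive.sum_eq_sum_of_add_eq {ι M : Type*} [Fintype ι] [AddCommMonoid M]
    [IsAddTorsionFree M] {σ : ι → ι} (hσ : σ.Involutive) {f g : ι → M}
    (h : ∀ k, f k + f (σ k) = g k + g (σ k)) : ∑ k, f k = ∑ k, g k := by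
  have hsum : ∀ F : ι → M, ∑ k, (F k + F (σ k)) = 2 • ∑ k, F k := fun F => by
    rw [Finset.sum_add_distrib, show ∑ k, F (σ k) = ∑ k, F k from Equiv.sum_comp hσ.toPerm F,
      two_nsmul]
  apply nsmul_right_injective two_ne_zero
  simp only [← hsum, h]

theorem Finset.sum_sign_eq_card_pos_sub_card_neg {α R : Type*} [Zero R] [LinearOrder R]
    (s : Finset α) (f : α → R) :
    ∑ x ∈ s, (SignType.sign (f x) : ℤ) =
      ((s.filter fun x => 0 < f x).card : ℤ) - (s.filter fun x => f x < 0).card := by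
  have hsign : ∀ x, (SignType.sign (f x) : ℤ) =
      (if 0 < f x then 1 else 0) - (if f x < 0 then 1 else 0) := fun x => by
    rcases lt_trichotomy (f x) 0 with h | h | h
    · simp [h, h.not_gt]
    · simp [h]
    · simp [h, h.not_gt]
  simp only [hsign, Finset.sum_sub_distrib, Finset.sum_boole]

namespace Matrix

variable {ι : Type*} [Fintype ι] [DecidableEq ι]

theorem dotProduct_transpose_mul_diagonal_mul_mulVec (P : Matrix ι ι ℝ) (μ x : ι → ℝ) :
    x ⬝ᵥ ((Pᵀ * diagonal μ * P) *ᵥ x) = ∑ k, μ k * (P *ᵥ x) k ^ 2 := by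
  rw [← mulVec_mulVec, ← mulVec_mulVec, dotProduct_mulVec, vecMul_transpose]
  simp only [dotProduct, mulVec_diagonal]
  exact Finset.sum_congr rfl fun k _ => by ring

theorem eq_zero_of_transpose_mul_diagonal_mul_eq {P Q : Matrix ι ι ℝ} (hQ : IsUnit Q.det)
    {μ ν : ι → ℝ} (h : Pᵀ * diagonal μ * P = Qᵀ * diagonal ν * Q) {x : ι → ℝ}
    (hP : ∀ k, 0 < μ k → (P *ᵥ x) k = 0) (hQx : ∀ k, ¬ 0 < ν k → (Q *ᵥ x) k = 0) : x = 0 := by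
  have hle : x ⬝ᵥ ((Pᵀ * diagonal μ * P) *ᵥ x) ≤ 0 := by
    rw [dotProduct_transpose_mul_diagonal_mul_mulVec]
    refine Finset.sum_nonpos fun k _ => ?_
    by_cases hk : 0 < μ k
    · simp [hP k hk]
    · exact mul_nonpos_of_nonpos_of_nonneg (not_lt.mp hk) (sq_nonneg _)
  have hterm : ∀ k, 0 ≤ ν k * (Q *ᵥ x) k ^ 2 := fun k => by
    by_cases hk : 0 < ν k
    · positivity
    · simp [hQx k hk]
  rw [h, dotProduct_transpose_mul_diagonal_mul_mulVec] at hle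
  have hzero := (Finset.sum_eq_zero_iff_of_nonneg fun k _ => hterm k).mp
    (le_antisymm hle (Finset.sum_nonneg fun k _ => hterm k))
  have hQx0 : Q *ᵥ x = Q *ᵥ 0 := funext fun k => by
    by_cases hk : 0 < ν k
    · simpa [hk.ne'] using hzero k (Finset.mem_univ k)
    · simpa using hQx k hk
  exact mulVec_injective_iff_isUnit.mpr ((isUnit_iff_isUnit_det Q).mpr hQ) hQx0

theorem card_pos_le_of_transpose_mul_diagonal_mul_eq {P Q : Matrix ι ι ℝ} (hQ : IsUnit Q.det)
    {μ ν : ι → ℝ} (h : Pᵀ * diagonal μ * P = Qᵀ * diagonal ν * Q) :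
    Fintype.card {k // 0 < ν k} ≤ Fintype.card {k // 0 < μ k} := by
  let M : (ι → ℝ) →ₗ[ℝ] ({k // 0 < μ k} → ℝ) × ({k // ¬ 0 < ν k} → ℝ) :=
    .prod (LinearMap.funLeft ℝ ℝ Subtype.val ∘ₗ toLin' P)
      (LinearMap.funLeft ℝ ℝ Subtype.val ∘ₗ toLin' Q)
  have hM : Function.Injective M := (injective_iff_map_eq_zero M).mpr fun x hx =>
    eq_zero_of_transpose_mul_diagonal_mul_eq hQ h
      (fun k hk => congrFun (congrArg Prod.fst hx) ⟨k, hk⟩)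
      (fun k hk => congrFun (congrArg Prod.snd hx) ⟨k, hk⟩)
  have hrank := LinearMap.finrank_le_finrank_of_injective hM
  simp only [Module.finrank_prod, Module.finrank_fintype_fun_eq_card,
    Fintype.card_subtype_compl] at hrank
  have := Fintype.card_subtype_le fun k => 0 < ν k
  omega

theorem card_pos_eq_of_transpose_mul_diagonal_mul_eq {P Q : Matrix ι ι ℝ} (hP : IsUnit P.det)
    (hQ : IsUnit Q.det) {μ ν : ι → ℝ} (h : Pᵀ * diagonal μ * P = Qᵀ * diagonal ν * Q) :
    Fintype.card {k // 0 < μ k} = Fintype.card {k // 0 < ν k} :=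
  le_antisymm (card_pos_le_of_transpose_mul_diagonal_mul_eq hP h.symm)
    (card_pos_le_of_transpose_mul_diagonal_mul_eq hQ h)

theorem card_neg_eq_of_transpose_mul_diagonal_mul_eq {P Q : Matrix ι ι ℝ} (hP : IsUnit P.det)
    (hQ : IsUnit Q.det) {μ ν : ι → ℝ} (h : Pᵀ * diagonal μ * P = Qᵀ * diagonal ν * Q) :
    Fintype.card {k // μ k < 0} = Fintype.card {k // ν k < 0} := by
  have h' : Pᵀ * diagonal (-μ) * P = Qᵀ * diagonal (-ν) * Q := by
    simp only [Pi.neg_def, ← diagonal_neg, Matrix.mul_neg, Matrix.neg_mul, h]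
  simpa using card_pos_eq_of_transpose_mul_diagonal_mul_eq hP hQ h'

end Matrix

theorem signature_transpose_mul_diagonal_mul {n : ℕ} {P : Matrix (Fin n) (Fin n) ℝ}
    (hP : IsUnit P.det) (ν : Fin n → ℝ) :
    signature (Pᵀ * diagonal ν * P) = ∑ k, (SignType.sign (ν k) : ℤ) := by
  have hA : (Pᵀ * diagonal ν * P).IsHermitian :=
    isHermitian_conjTranspose_mul_mul P (isHermitian_diagonal ν)
  let U : Matrix (Fin n) (Fin n) ℝ := hA.eigenvectorUnitary
  have hU : IsUnit Uᵀ.det := by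
    rw [det_transpose]; exact UnitaryGroup.det_isUnit _
  have hdiag : Uᵀᵀ * diagonal hA.eigenvalues * Uᵀ = Pᵀ * diagonal ν * P := by
    have := hA.spectral_theorem
    simp only [Unitary.conjStarAlgAut_apply, RCLike.ofReal_real_eq_id, Function.id_comp] at this
    rw [star_eq_conjTranspose, conjTranspose_eq_transpose_of_trivial] at this
    rw [transpose_transpose]
    exact this.symm
  rw [signature, dif_pos hA, ← Fintype.card_subtype, ← Fintype.card_subtype,
    card_pos_eq_of_transpose_mul_diagonal_mul_eq hU hP hdiag,
    card_neg_eq_of_transpose_mul_diagonal_mul_eq hU hP hdiag, Fintype.card_subtype,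
    Fintype.card_subtype, Finset.sum_sign_eq_card_pos_sub_card_neg]

-- The value `1` at `0` keeps the rows of `realRows` independent for a pair of weight `0`.
noncomputable def sqrtTwoMul (w : ℂ) : ℂ := if w = 0 then 1 else (2 * w) ^ (2⁻¹ : ℂ)

theorem sqrtTwoMul_ne_zero (w : ℂ) : sqrtTwoMul w ≠ 0 := by
  unfold sqrtTwoMul
  split_ifs with hw
  · exact one_ne_zero
  · exact (Complex.cpow_ne_zero_iff_of_exponent_ne_zero (by norm_num)).mpr (by simpa using hw)

theorem sqrtTwoMul_sq {w : ℂ} (hw : w ≠ 0) : sqrtTwoMul w ^ 2 = 2 * w := by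
  rw [sqrtTwoMul, if_neg hw]
  exact_mod_cast Complex.cpow_nat_inv_pow (2 * w) two_ne_zero

section RealForm

variable {n : ℕ} (σ : Fin n → Fin n) (V : Matrix (Fin n) (Fin n) ℂ) (c : Fin n → ℂ)

-- `σ` is complex conjugation on indices; `k < σ k` picks one representative of each conjugate pair.
noncomputable def realRows : Matrix (Fin n) (Fin n) ℝ := fun k i =>
  if σ k = k then (V k i).re
  else if k < σ k then (sqrtTwoMul (c k) * V k i).re
  else (sqrtTwoMul (c (σ k)) * V (σ k) i).im

noncomputable def realWeights : Fin n → ℝ := fun k =>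
  if σ k = k then (c k).re else if c k = 0 then 0 else if k < σ k then 1 else -1

variable {σ V c} {k : Fin n}

theorem realRows_of_eq (hk : σ k = k) (i : Fin n) : realRows σ V c k i = (V k i).re := by
  simp only [realRows, if_pos hk]

theorem realRows_of_lt (hk : k < σ k) (i : Fin n) :
    realRows σ V c k i = (sqrtTwoMul (c k) * V k i).re := by
  simp only [realRows, if_neg hk.ne', if_pos hk]

theorem realRows_partner_of_lt (hσ : σ.Involutive) (hk : k < σ k) (i : Fin n) :
    realRows σ V c (σ k) i = (sqrtTwoMul (c k) * V k i).im := by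
  simp only [realRows, hσ k, if_neg hk.ne, if_neg hk.not_gt]

theorem realWeights_of_eq (hk : σ k = k) : realWeights σ c k = (c k).re := by
  simp only [realWeights, if_pos hk]

theorem realWeights_of_ne (hk : σ k ≠ k) (hck : c k ≠ 0) :
    realWeights σ c k = if k < σ k then 1 else -1 := by
  simp only [realWeights, if_neg hk, if_neg hck]

theorem realWeights_of_eq_zero (hk : σ k ≠ k) (hck : c k = 0) : realWeights σ c k = 0 := by
  simp only [realWeights, if_neg hk, if_pos hck]

theorem realRows_mul_realWeights_mul_add_of_lt (hσ : σ.Involutive)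
    (hV : ∀ k i, V (σ k) i = conj (V k i)) (hc : ∀ k, c (σ k) = conj (c k)) (hk : k < σ k)
    (i j : Fin n) :
    realRows σ V c k i * realWeights σ c k * realRows σ V c k j +
      realRows σ V c (σ k) i * realWeights σ c (σ k) * realRows σ V c (σ k) j =
    (V k i * c k * V k j).re + (V (σ k) i * c (σ k) * V (σ k) j).re := by
  have hconj : V (σ k) i * c (σ k) * V (σ k) j = conj (V k i * c k * V k j) := by
    simp only [hV, hc, map_mul]
  have hσk : σ (σ k) ≠ σ k := by rw [hσ k]; exact hk.ne
  rw [hconj, Complex.conj_re, realRows_of_lt hk, realRows_of_lt hk,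
    realRows_partner_of_lt hσ hk, realRows_partner_of_lt hσ hk]
  by_cases hc0 : c k = 0
  · have hcσ : c (σ k) = 0 := by rw [hc, hc0, map_zero]
    simp [realWeights_of_eq_zero hk.ne' hc0, realWeights_of_eq_zero hσk hcσ, hc0]
  · have hcσ : c (σ k) ≠ 0 := by rw [hc]; exact (_root_.map_ne_zero _).mpr hc0
    rw [realWeights_of_ne hk.ne' hc0, realWeights_of_ne hσk hcσ, if_pos hk, hσ k,
      if_neg hk.not_gt]
    set a := sqrtTwoMul (c k)
    have hsq : (a * V k i * (a * V k j)).re = 2 * (V k i * c k * V k j).re := by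
      rw [show a * V k i * (a * V k j) = a ^ 2 * (V k i * V k j) by ring, sqrtTwoMul_sq hc0]
      simp only [Complex.mul_re, Complex.mul_im, Complex.re_ofNat, Complex.im_ofNat]
      ring
    rw [Complex.mul_re] at hsq
    linear_combination hsq

theorem realRows_mul_realWeights_mul_of_eq (hV : ∀ k i, V (σ k) i = conj (V k i))
    (hc : ∀ k, c (σ k) = conj (c k)) (hk : σ k = k) (i j : Fin n) :
    realRows σ V c k i * realWeights σ c k * realRows σ V c k j = (V k i * c k * V k j).re := by
  have him : ∀ i, (V k i).im = 0 := fun i => Complex.conj_eq_iff_im.mp (hk ▸ hV k i).symm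
  have hcim : (c k).im = 0 := Complex.conj_eq_iff_im.mp (hk ▸ hc k).symm
  simp [realRows_of_eq hk, realWeights_of_eq hk, Complex.mul_re, Complex.mul_im, him, hcim]

theorem sum_realRows_mul_realWeights_mul (hσ : σ.Involutive)
    (hV : ∀ k i, V (σ k) i = conj (V k i)) (hc : ∀ k, c (σ k) = conj (c k)) (i j : Fin n) :
    ∑ k, realRows σ V c k i * realWeights σ c k * realRows σ V c k j =
      ∑ k, (V k i * c k * V k j).re := by
  refine hσ.sum_eq_sum_of_add_eq fun k => ?_
  rcases lt_trichotomy k (σ k) with hk | hk | hk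
  · exact realRows_mul_realWeights_mul_add_of_lt hσ hV hc hk i j
  · rw [← hk, realRows_mul_realWeights_mul_of_eq hV hc hk.symm]
  · have hk' : σ k < σ (σ k) := by rwa [hσ k]
    have := realRows_mul_realWeights_mul_add_of_lt hσ hV hc hk' i j
    rw [hσ k] at this
    rw [add_comm, this, add_comm]

theorem realWeights_partner_of_ne (hσ : σ.Involutive) (hc : ∀ k, c (σ k) = conj (c k))
    (hk : σ k ≠ k) : realWeights σ c (σ k) = -realWeights σ c k := by
  have hσk : σ (σ k) ≠ σ k := by rwa [hσ k, ne_comm]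
  by_cases hc0 : c k = 0
  · have hcσ : c (σ k) = 0 := by rw [hc, hc0, map_zero]
    rw [realWeights_of_eq_zero hk hc0, realWeights_of_eq_zero hσk hcσ, neg_zero]
  · have hcσ : c (σ k) ≠ 0 := by rw [hc]; exact (_root_.map_ne_zero _).mpr hc0
    rw [realWeights_of_ne hk hc0, realWeights_of_ne hσk hcσ, hσ k]
    rcases lt_or_gt_of_ne hk with hlt | hlt
    · rw [if_pos hlt, if_neg hlt.not_gt, neg_neg]
    · rw [if_neg hlt.not_gt, if_pos hlt]

theorem sum_sign_realWeights (hσ : σ.Involutive) (hc : ∀ k, c (σ k) = conj (c k)) :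
    ∑ k, (SignType.sign (realWeights σ c k) : ℤ) =
      ∑ k with σ k = k, (SignType.sign (c k).re : ℤ) := by
  rw [Finset.sum_filter]
  refine hσ.sum_eq_sum_of_add_eq fun k => ?_
  by_cases hk : σ k = k
  · simp only [hk, ↓reduceIte, realWeights_of_eq hk]
  · have hσk : σ (σ k) ≠ σ k := by rwa [hσ k, ne_comm]
    rw [if_neg hk, if_neg hσk, realWeights_partner_of_ne hσ hc hk, Left.sign_neg,
      SignType.coe_neg, add_neg_cancel, add_zero]

theorem transpose_mul_diagonal_mul_realRows (hσ : σ.Involutive)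
    (hV : ∀ k i, V (σ k) i = conj (V k i)) (hc : ∀ k, c (σ k) = conj (c k))
    {H : Matrix (Fin n) (Fin n) ℝ} (hH : ∀ i j, (H i j : ℂ) = ∑ k, V k i * c k * V k j) :
    (realRows σ V c)ᵀ * diagonal (realWeights σ c) * realRows σ V c = H := by
  ext i j
  rw [mul_apply]
  simp only [mul_diagonal, transpose_apply]
  rw [sum_realRows_mul_realWeights_mul hσ hV hc, ← Complex.re_sum, ← hH, Complex.ofReal_re]

theorem isUnit_det_realRows (hσ : σ.Involutive) (hV : ∀ k i, V (σ k) i = conj (V k i))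
    (hdet : V.det ≠ 0) : IsUnit (realRows σ V c).det := by
  rw [isUnit_iff_ne_zero]
  intro h0
  obtain ⟨x, hx0, hx⟩ := exists_mulVec_eq_zero_iff.mpr h0
  let w : Fin n → ℂ := V *ᵥ fun i => (x i : ℂ)
  have hre : ∀ a : Fin n → ℂ, ∑ i, (a i).re * x i = (∑ i, a i * x i).re := fun a => by
    simp [Complex.re_sum]
  have him : ∀ a : Fin n → ℂ, ∑ i, (a i).im * x i = (∑ i, a i * x i).im := fun a => by
    simp [Complex.im_sum]
  have hscale : ∀ (u : ℂ) k, ∑ i, u * V k i * x i = u * w k := fun u k => by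
    simp only [w, mulVec, dotProduct, Finset.mul_sum, mul_assoc]
  have hrow : ∀ k, (realRows σ V c *ᵥ x) k = 0 := fun k => congrFun hx k
  simp only [mulVec, dotProduct] at hrow
  have hwσ : ∀ k, w (σ k) = conj (w k) := fun k => by
    simp [w, mulVec, dotProduct, hV, map_sum]
  have hw_lt : ∀ k, k < σ k → w k = 0 := fun k hk => by
    have h1 := hrow k
    have h2 := hrow (σ k)
    simp only [realRows_of_lt hk, realRows_partner_of_lt hσ hk, hre, him, hscale] at h1 h2
    exact (mul_eq_zero.mp (Complex.ext h1 h2)).resolve_left (sqrtTwoMul_ne_zero _)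
  have hw : w = 0 := funext fun k => by
    rcases lt_trichotomy k (σ k) with hk | hk | hk
    · exact hw_lt k hk
    · have h1 := hrow k
      simp only [realRows_of_eq hk.symm, hre] at h1
      have h2 : (w k).im = 0 := Complex.conj_eq_iff_im.mp (by rw [← hwσ, ← hk])
      exact Complex.ext h1 h2
    · have hk' : σ k < σ (σ k) := by rwa [hσ k]
      rw [← hσ k, hwσ, hw_lt _ hk', map_zero, Pi.zero_apply]
  exact hdet (exists_mulVec_eq_zero_iff.mp ⟨_, fun h => hx0 (funext fun i => by
    simpa using congrFun h i), hw⟩)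

end RealForm

theorem signature_eq_sum_sign_of_conj {n : ℕ} {σ : Fin n → Fin n} {V : Matrix (Fin n) (Fin n) ℂ}
    {c : Fin n → ℂ} (hσ : σ.Involutive) (hV : ∀ k i, V (σ k) i = conj (V k i))
    (hdet : V.det ≠ 0) (hc : ∀ k, c (σ k) = conj (c k)) {H : Matrix (Fin n) (Fin n) ℝ}
    (hH : ∀ i j, (H i j : ℂ) = ∑ k, V k i * c k * V k j) :
    signature H = ∑ k with σ k = k, (SignType.sign (c k).re : ℤ) := by
  rw [← transpose_mul_diagonal_mul_realRows hσ hV hc hH,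
    signature_transpose_mul_diagonal_mul (isUnit_det_realRows hσ hV hdet),
    sum_sign_realWeights hσ hc]

theorem exists_involutive_conj {ι : Type*} {z : ι → ℂ} (hz : Function.Injective z)
    (h : ∀ k, ∃ j, z j = conj (z k)) :
    ∃ σ : ι → ι, σ.Involutive ∧ ∀ k, z (σ k) = conj (z k) := by
  choose σ hσ using h
  exact ⟨σ, fun k => hz (by rw [hσ, hσ, Complex.conj_conj]), hσ⟩

section Roots

variable {K A ι : Type*} [Field K] [CommRing A] [IsDomain A] [Algebra K A] [Fintype ι]
  {p : K[X]} {z : ι → A}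

theorem aeval_eq_zero_iff_of_map_eq_prod (h : p.map (algebraMap K A) = ∏ i, (X - C (z i)))
    (w : A) : aeval w p = 0 ↔ ∃ k, z k = w := by
  rw [← eval_map_algebraMap, h, eval_prod, Finset.prod_eq_zero_iff]
  simp [sub_eq_zero, eq_comm]

theorem mem_roots_iff_of_map_eq_prod (hp : p ≠ 0)
    (h : p.map (algebraMap K A) = ∏ i, (X - C (z i))) (x : K) :
    x ∈ p.roots ↔ ∃ k, z k = algebraMap K A x := by
  rw [mem_roots hp, IsRoot.def, ← aeval_eq_zero_iff_of_map_eq_prod h,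
    aeval_algebraMap_apply_eq_algebraMap_eval, map_eq_zero_iff _ (algebraMap K A).injective]

end Roots

theorem sum_roots_toFinset_eq_sum_of_map_eq_prod {ι M : Type*} [Fintype ι] [AddCommMonoid M]
    {p : ℝ[X]} {z : ι → ℂ} (hp : p ≠ 0) (h : p.map (algebraMap ℝ ℂ) = ∏ i, (X - C (z i)))
    (hz : Function.Injective z) (g : ℝ → M) :
    ∑ x ∈ p.roots.toFinset, g x = ∑ k with ((z k).re : ℂ) = z k, g (z k).re := by
  have himage : ({k | ((z k).re : ℂ) = z k} : Finset ι).image (fun k => (z k).re) =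
      p.roots.toFinset := by
    ext x
    simp only [Finset.mem_image, Finset.mem_filter, Finset.mem_univ, true_and,
      Multiset.mem_toFinset, mem_roots_iff_of_map_eq_prod hp h, Complex.coe_algebraMap]
    constructor
    · rintro ⟨k, hk, rfl⟩
      exact ⟨k, hk.symm⟩
    · rintro ⟨k, hk⟩
      exact ⟨k, by simp [hk], by simp [hk]⟩
  rw [← himage, Finset.sum_image]
  intro k₁ hk₁ k₂ hk₂ he
  simp only [Finset.coe_filter, Finset.mem_univ, true_and, Set.mem_ofPred_eq] at hk₁ hk₂
  exact hz (by rw [← hk₁, ← hk₂, show (z k₁).re = (z k₂).re from he])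

theorem hermite_theorem_general (n : ℕ) (p q : Polynomial ℝ)
    (hmonic : p.Monic)
    (z : Fin n → ℂ) (hinj : Function.Injective z)
    (hroots : p.map (algebraMap ℝ ℂ) = ∏ i : Fin n, (X - C (z i)))
    (H : Matrix (Fin n) (Fin n) ℝ)
    (hH : ∀ i j : Fin n, (H i j : ℂ) =
      ∑ k : Fin n, z k ^ ((i : ℕ) + (j : ℕ)) * (q.map (algebraMap ℝ ℂ)).eval (z k)) :
    signature H =
      ((p.roots.toFinset.filter fun x => 0 < q.eval x).card : ℤ) -
      ((p.roots.toFinset.filter fun x => q.eval x < 0).card : ℤ) := by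
  have hroot := aeval_eq_zero_iff_of_map_eq_prod hroots
  obtain ⟨σ, hσ, hσz⟩ := exists_involutive_conj hinj fun k =>
    (hroot _).mp (by rw [aeval_conj, (hroot _).mpr ⟨k, rfl⟩, map_zero])
  have hV : ∀ k i, vandermonde z (σ k) i = conj (vandermonde z k i) := fun k i => by
    simp [hσz]
  have hc : ∀ k, aeval (z (σ k)) q = conj (aeval (z k) q) := fun k => by
    rw [hσz, aeval_conj]
  have hHV : ∀ i j, (H i j : ℂ) =
      ∑ k, vandermonde z k i * aeval (z k) q * vandermonde z k j := fun i j => by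
    simp only [hH, vandermonde_apply, pow_add, eval_map_algebraMap]
    exact Finset.sum_congr rfl fun k _ => by ring
  have hfix : ∀ k, σ k = k ↔ ((z k).re : ℂ) = z k := fun k => by
    rw [← Complex.conj_eq_iff_re, ← hσz, hinj.eq_iff]
  rw [signature_eq_sum_sign_of_conj hσ hV (det_vandermonde_ne_zero_iff.mpr hinj) hc hHV,
    ← Finset.sum_sign_eq_card_pos_sub_card_neg,
    sum_roots_toFinset_eq_sum_of_map_eq_prod hmonic.ne_zero hroots hinj]
  have hreal : ∀ x : ℝ, (aeval (x : ℂ) q).re = q.eval x := fun x => by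
    rw [show aeval (x : ℂ) q = q.eval x from aeval_ofReal q x, Complex.ofReal_re]
  refine Finset.sum_congr (Finset.filter_congr fun k _ => hfix k) fun k hk => ?_
  conv_lhs => rw [← (Finset.mem_filter.mp hk).2, hreal]

/-- Hermite's theorem: for a monic squarefree real polynomial `p` of
degree `n` with distinct complex roots `z`, and a real polynomial `q`, the real
symmetric matrix with entries `∑ₖ zₖ^(i+j) q(zₖ)` has signature `N₊ - N₋` where
`N₊` (resp. `N₋`) counts the real roots `x` of `p` with `q(x) > 0` (resp. `< 0`). -/
theorem hermite_theorem (n : ℕ) (p q : Polynomial ℝ)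
    (hmonic : p.Monic) (hsf : Squarefree p) (hdeg : p.natDegree = n)
    (z : Fin n → ℂ) (hinj : Function.Injective z)
    (hroots : p.map (algebraMap ℝ ℂ) = ∏ i : Fin n, (X - C (z i)))
    (H : Matrix (Fin n) (Fin n) ℝ) (hsymm : H.IsHermitian)
    (hH : ∀ i j : Fin n, (H i j : ℂ) =
      ∑ k : Fin n, z k ^ ((i : ℕ) + (j : ℕ)) * (q.map (algebraMap ℝ ℂ)).eval (z k)) :
    signature H =
      ((p.roots.toFinset.filter fun x => 0 < q.eval x).card : ℤ) -
      ((p.roots.toFinset.filter fun x => q.eval x < 0).card : ℤ) :=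
  hermite_theorem_general n p q hmonic z hinj hroots H hH
end

section
/- Let p be a monic squarefree real polynomial of degree n and let H_1 be the n×n matrix with entries H_1[i,j] = ∑_{k=1}^n z_k^{i+j-2}, where z_1,...,z_n are the distinct complex roots of p. Then the signature of H_1 equals the number of real roots of p. -/
open Polynomial Matrix

/-!
With `u_k(x) = ∑ᵢ z_kⁱ xᵢ`, the quadratic form of `H₁` is `∑ₖ u_k(x)²`. The roots are closed under
conjugation and `u` at a conjugate root is the conjugate of `u`, so a pair `z, z̄` of non-real roots
contributes `u² + ū² = 2 (Re u)² - 2 (Im u)²`, one positive and one negative square, while a real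
root contributes the single positive square `u²`. These real coordinates are linearly independent
because the Vandermonde matrix of the distinct roots is invertible, so by Sylvester's law of
inertia the signature is the number of real roots.
-/

open Finset QuadraticMap

namespace Matrix

variable {ι : Type*} [Fintype ι] [DecidableEq ι]

theorem equivalent_weightedSumSquares_of_eq_transpose_mul_diagonal_mul {R : Type*} [CommRing R]
    {A P : Matrix ι ι R} (hP : IsUnit P) {w : ι → R} (hA : A = Pᵀ * diagonal w * P) :
    A.toQuadraticForm'.Equivalent (weightedSumSquares R w) := by
  refine ⟨⟨P.toLinearEquiv' hP.invertible, fun x => ?_⟩⟩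
  simp only [toQuadraticForm', LinearMap.BilinMap.toQuadraticMap_apply, toLinearMap₂'_apply', hA,
    ← mulVec_mulVec, dotProduct_mulVec x Pᵀ, vecMul_transpose, weightedSumSquares_apply]
  simp [dotProduct, mulVec_diagonal, toLinearEquiv', mul_left_comm]

theorem IsHermitian.eq_transpose_mul_diagonal_mul {A : Matrix ι ι ℝ} (hA : A.IsHermitian) :
    A = (star (hA.eigenvectorUnitary : Matrix ι ι ℝ))ᵀ * diagonal hA.eigenvalues *
      star (hA.eigenvectorUnitary : Matrix ι ι ℝ) := by
  conv_lhs => rw [hA.spectral_theorem, Unitary.conjStarAlgAut_apply]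
  simp [star_eq_conjTranspose, RCLike.ofReal_real_eq_id]

theorem IsHermitian.signature_eq_of_eq_transpose_mul_diagonal_mul {n : ℕ}
    {A P : Matrix (Fin n) (Fin n) ℝ} (hA : A.IsHermitian) (hP : IsUnit P) {w : Fin n → ℝ}
    (hAP : A = Pᵀ * diagonal w * P) :
    signature A = (#{i | 0 < w i} : ℤ) - #{i | w i < 0} := by
  have hU : IsUnit (star (hA.eigenvectorUnitary : Matrix (Fin n) (Fin n) ℝ)) :=
    Unitary.isUnit_coe (U := star hA.eigenvectorUnitary)
  have hE := equivalent_weightedSumSquares_of_eq_transpose_mul_diagonal_mul hU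
    hA.eq_transpose_mul_diagonal_mul
  have hW := equivalent_weightedSumSquares_of_eq_transpose_mul_diagonal_mul hP hAP
  have hpos := (QuadraticForm.sigPos_of_equiv_weightedSumSquares hE).symm.trans
    (QuadraticForm.sigPos_of_equiv_weightedSumSquares hW)
  have hneg := (QuadraticForm.sigNeg_of_equiv_weightedSumSquares hE).symm.trans
    (QuadraticForm.sigNeg_of_equiv_weightedSumSquares hW)
  simp only [Set.ncard_eq_toFinset_card', Set.toFinset_ofPred] at hpos hneg
  rw [signature, dif_pos hA, hpos, hneg]

end Matrix

open ComplexConjugate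

namespace Complex

-- `s` stands for the imaginary part of the root that the coordinate and the weight belong to.
noncomputable def conjPairCoord (s : ℝ) : ℂ →ₗ[ℝ] ℝ := if s < 0 then imLm else reLm

noncomputable def conjPairWeight (s : ℝ) : ℝ := if 0 < s then 2 else if s < 0 then -2 else 1

theorem conjPairCoord_mul_add_conj (s : ℝ) {a b : ℂ} (ha : s = 0 → a.im = 0)
    (hb : s = 0 → b.im = 0) :
    ((conjPairCoord s a * conjPairWeight s * conjPairCoord s b : ℝ) : ℂ) +
      ((conjPairCoord (-s) (conj a) * conjPairWeight (-s) * conjPairCoord (-s) (conj b) : ℝ) : ℂ)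
      = a * b + conj a * conj b := by
  rcases lt_trichotomy s 0 with hs | rfl | hs
  · apply Complex.ext <;> simp [conjPairCoord, conjPairWeight, hs, hs.not_gt] <;> ring
  · apply Complex.ext <;> simp [conjPairCoord, conjPairWeight, ha rfl, hb rfl]
  · apply Complex.ext <;> simp [conjPairCoord, conjPairWeight, hs, hs.not_gt] <;> ring

theorem eq_zero_of_conjPairCoord_eq_zero {s : ℝ} {a : ℂ} (ha : s = 0 → a.im = 0)
    (h : conjPairCoord s a = 0) (hconj : conjPairCoord (-s) (conj a) = 0) : a = 0 := by
  rcases lt_trichotomy s 0 with hs | rfl | hs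
  · simp_all [conjPairCoord, Complex.ext_iff, hs.not_gt]
  · simp_all [conjPairCoord, Complex.ext_iff]
  · simp_all [conjPairCoord, Complex.ext_iff, hs.not_gt]

theorem conjPairWeight_pos_iff {s : ℝ} : 0 < conjPairWeight s ↔ 0 ≤ s := by
  unfold conjPairWeight
  split_ifs <;> grind

theorem conjPairWeight_neg_iff {s : ℝ} : conjPairWeight s < 0 ↔ s < 0 := by
  unfold conjPairWeight
  split_ifs <;> grind

end Complex

open Complex

theorem Finset.sum_eq_sum_of_add_comp_eq {ι M : Type*} [Fintype ι] [AddCommMonoid M]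
    [IsAddTorsionFree M] {f g : ι → M} {σ : ι → ι} (hσ : σ.Bijective)
    (h : ∀ k, f k + f (σ k) = g k + g (σ k)) : ∑ k, f k = ∑ k, g k := by
  apply nsmul_right_injective two_ne_zero
  calc 2 • ∑ k, f k = ∑ k, (f k + f (σ k)) := by rw [sum_add_distrib, hσ.sum_comp, two_nsmul]
    _ = ∑ k, (g k + g (σ k)) := sum_congr rfl fun k _ => h k
    _ = 2 • ∑ k, g k := by rw [sum_add_distrib, hσ.sum_comp, two_nsmul]

theorem exists_bijective_apply_eq_conj {ι : Type*} [Finite ι] {z : ι → ℂ} (hinj : z.Injective)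
    (hconj : ∀ k, ∃ l, z l = conj (z k)) :
    ∃ σ : ι → ι, σ.Bijective ∧ ∀ k, z (σ k) = conj (z k) := by
  choose σ hσ using hconj
  refine ⟨σ, Finite.injective_iff_bijective.1 fun a b hab => ?_, hσ⟩
  have hzab := congrArg z hab
  rw [hσ, hσ] at hzab
  exact hinj ((starRingEnd ℂ).injective hzab)

variable {n : ℕ}

noncomputable def realVandermonde (z : Fin n → ℂ) : Matrix (Fin n) (Fin n) ℝ :=
  of fun k i => conjPairCoord (z k).im (z k ^ (i : ℕ))

section
variable {z : Fin n → ℂ} {σ : Fin n → Fin n}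

theorem eq_realVandermonde_transpose_mul_diagonal_mul (hσ : σ.Bijective)
    (hz : ∀ k, z (σ k) = conj (z k)) {H : Matrix (Fin n) (Fin n) ℝ}
    (hH : ∀ i j : Fin n, (H i j : ℂ) = ∑ k : Fin n, z k ^ ((i : ℕ) + (j : ℕ))) :
    H = (realVandermonde z)ᵀ * diagonal (fun k => conjPairWeight (z k).im) * realVandermonde z := by
  ext i j
  apply ofReal_injective
  rw [hH, mul_apply, ofReal_sum]
  refine sum_eq_sum_of_add_comp_eq hσ fun k => ?_
  have hreal : ∀ m : ℕ, (z k).im = 0 → (z k ^ m).im = 0 := fun m h => by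
    rw [← conj_eq_iff_im, map_pow, conj_eq_iff_im.2 h]
  simp only [mul_diagonal, transpose_apply, realVandermonde, of_apply, hz, conj_im, ← map_pow]
  rw [conjPairCoord_mul_add_conj _ (hreal _) (hreal _), pow_add, map_mul]

theorem isUnit_realVandermonde (hinj : z.Injective) (hz : ∀ k, z (σ k) = conj (z k)) :
    IsUnit (realVandermonde z) := by
  rw [← mulVec_injective_iff_isUnit, ← coe_mulVecLin, injective_iff_map_eq_zero]
  intro x (hx : realVandermonde z *ᵥ x = 0)
  set u := vandermonde z *ᵥ fun i => (x i : ℂ)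
  have hWu : ∀ k, (realVandermonde z *ᵥ x) k = conjPairCoord (z k).im (u k) := fun k => by
    simp only [u, mulVec, dotProduct, realVandermonde, of_apply, vandermonde_apply, map_sum]
    refine sum_congr rfl fun i _ => ?_
    rw [mul_comm _ (x i : ℂ), ← real_smul, map_smul, smul_eq_mul, mul_comm]
  have hu_conj : ∀ k, u (σ k) = conj (u k) := fun k => by
    simp [u, mulVec, dotProduct, hz, map_sum]
  have hu_real : ∀ k, (z k).im = 0 → (u k).im = 0 := fun k h => by
    have hσk : σ k = k := hinj (by rw [hz, conj_eq_iff_im.2 h])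
    rw [← conj_eq_iff_im, ← hu_conj, hσk]
  have hu : u = 0 := funext fun k => eq_zero_of_conjPairCoord_eq_zero (hu_real k)
    (by rw [← hWu]; simp [hx]) (by rw [← conj_im, ← hz, ← hu_conj, ← hWu]; simp [hx])
  have := eq_zero_of_mulVec_eq_zero (det_vandermonde_ne_zero_iff.2 hinj) hu
  exact funext fun i => by simpa using congrFun this i

end

theorem card_conjPairWeight_pos_sub_card_neg {ι : Type*} [Fintype ι] {s : ι → ℝ} {σ : ι → ι}
    (hσ : σ.Bijective) (hs : ∀ k, s (σ k) = -s k) :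
    (#{k | 0 < conjPairWeight (s k)} : ℤ) - #{k | conjPairWeight (s k) < 0} = #{k | s k = 0} := by
  have hsplit : #{k | 0 ≤ s k} = #{k | s k = 0} + #{k | 0 < s k} := by
    classical
    simp only [le_iff_eq_or_lt, eq_comm (a := (0 : ℝ)), filter_or]
    exact card_union_of_disjoint (disjoint_filter.2 fun k _ h => by simp [h])
  have hpair : #{k | 0 < s k} = #{k | s k < 0} :=
    card_bijective σ hσ fun k => by simp [hs]
  simp only [conjPairWeight_pos_iff, conjPairWeight_neg_iff, hsplit, hpair]
  push_cast
  ring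

theorem signature_eq_card_im_eq_zero {z : Fin n → ℂ} (hinj : z.Injective)
    (hconj : ∀ k, ∃ l, z l = conj (z k)) {H : Matrix (Fin n) (Fin n) ℝ}
    (hH : ∀ i j : Fin n, (H i j : ℂ) = ∑ k : Fin n, z k ^ ((i : ℕ) + (j : ℕ))) :
    signature H = #{k | (z k).im = 0} := by
  obtain ⟨σ, hσ, hz⟩ := exists_bijective_apply_eq_conj hinj hconj
  have hHerm : H.IsHermitian := IsHermitian.ext fun i j => ofReal_injective (by simp [hH, add_comm])
  rw [hHerm.signature_eq_of_eq_transpose_mul_diagonal_mul (isUnit_realVandermonde hinj hz)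
    (eq_realVandermonde_transpose_mul_diagonal_mul hσ hz hH)]
  exact card_conjPairWeight_pos_sub_card_neg hσ fun k => by rw [hz, conj_im]

namespace Polynomial

variable {ι : Type*} [Fintype ι] {p : ℝ[X]} {z : ι → ℂ}

theorem isRoot_map_iff_mem_range (hroots : p.map (algebraMap ℝ ℂ) = ∏ i, (X - C (z i))) {w : ℂ} :
    (p.map (algebraMap ℝ ℂ)).IsRoot w ↔ w ∈ Set.range z := by
  simp [hroots, eval_prod, prod_eq_zero_iff, sub_eq_zero, eq_comm (a := w)]

theorem exists_apply_eq_conj (hroots : p.map (algebraMap ℝ ℂ) = ∏ i, (X - C (z i))) (k : ι) :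
    ∃ l, z l = conj (z k) := by
  have hk : (p.map (algebraMap ℝ ℂ)).IsRoot (z k) := (isRoot_map_iff_mem_range hroots).2 ⟨k, rfl⟩
  refine (isRoot_map_iff_mem_range hroots).1 ?_
  simpa [IsRoot, eval_map_algebraMap, aeval_conj] using hk

theorem card_roots_toFinset_eq_card_im_eq_zero (hinj : z.Injective)
    (hroots : p.map (algebraMap ℝ ℂ) = ∏ i, (X - C (z i))) :
    p.roots.toFinset.card = #{k | (z k).im = 0} := by
  have hp : p ≠ 0 := by
    rw [← Polynomial.map_ne_zero_iff (algebraMap ℝ ℂ).injective, hroots]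
    exact (monic_prod_of_monic _ _ fun i _ => monic_X_sub_C (z i)).ne_zero
  have hmem : ∀ r : ℝ, r ∈ p.roots.toFinset ↔ (r : ℂ) ∈ Set.range z := fun r => by
    rw [← isRoot_map_iff_mem_range hroots, IsRoot, eval_map_algebraMap, ← coe_algebraMap,
      aeval_algebraMap_apply_eq_algebraMap_eval]
    simp [hp]
  symm
  refine card_bij (fun k _ => (z k).re) (fun k hk => ?_) (fun a ha b hb hab => ?_) fun r hr => ?_
  · rw [mem_filter] at hk
    exact (hmem _).2 ⟨k, Complex.ext rfl (by simp [hk.2])⟩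
  · rw [mem_filter] at ha hb
    exact hinj (Complex.ext hab (ha.2.trans hb.2.symm))
  · obtain ⟨k, hk⟩ := (hmem r).1 hr
    exact ⟨k, by simp [hk], by simp [hk]⟩

end Polynomial

theorem signature_H1_eq_card_real_roots_general (n : ℕ) (p : Polynomial ℝ)
    (z : Fin n → ℂ) (hinj : Function.Injective z)
    (hroots : p.map (algebraMap ℝ ℂ) = ∏ i : Fin n, (X - C (z i)))
    (H : Matrix (Fin n) (Fin n) ℝ)
    (hH : ∀ i j : Fin n, (H i j : ℂ) = ∑ k : Fin n, z k ^ ((i : ℕ) + (j : ℕ))) :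
    signature H = (p.roots.toFinset.card : ℤ) := by
  rw [signature_eq_card_im_eq_zero hinj (exists_apply_eq_conj hroots) hH,
    card_roots_toFinset_eq_card_im_eq_zero hinj hroots]

/-- For a monic squarefree real polynomial `p` of degree `n` with
distinct complex roots `z`, the matrix `H₁` with entries `∑ₖ zₖ^(i+j)` has
signature equal to the number of real roots of `p`. -/
theorem signature_H1_eq_card_real_roots (n : ℕ) (p : Polynomial ℝ)
    (hmonic : p.Monic) (hsf : Squarefree p) (hdeg : p.natDegree = n)
    (z : Fin n → ℂ) (hinj : Function.Injective z)
    (hroots : p.map (algebraMap ℝ ℂ) = ∏ i : Fin n, (X - C (z i)))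
    (H : Matrix (Fin n) (Fin n) ℝ)
    (hH : ∀ i j : Fin n, (H i j : ℂ) = ∑ k : Fin n, z k ^ ((i : ℕ) + (j : ℕ))) :
    signature H = (p.roots.toFinset.card : ℤ) :=
  signature_H1_eq_card_real_roots_general n p z hinj hroots H hH
end

section
/- Let p be a monic squarefree real polynomial of degree n with companion matrix M, and let q be any real polynomial. Then H_1 · q(M) = H_q, where H_1 and H_q are the Hermite matrices of p with auxiliary polynomials 1 and q respectively. That is, the algorithm computing H_q as the product of H_1 with q evaluated at the companion matrix is correct. -/
open Polynomial Matrix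

/-- The companion matrix of a polynomial `p`: 1's on the subdiagonal and
`-p.coeff i` in the last column. -/
def companion (p : Polynomial ℝ) : Matrix (Fin p.natDegree) (Fin p.natDegree) ℝ :=
  fun i j => (if (i : ℕ) = (j : ℕ) + 1 then 1 else 0) +
    (if (j : ℕ) + 1 = p.natDegree then -p.coeff i else 0)

/-- The Hermite matrix of `p` with respect to the auxiliary polynomial `q`,
defined via traces of multiplication maps: `H_q[i,j] = Tr(M_{q·x^{i+j}})`
where `M` is the companion matrix of `p` (indices starting at 0). -/
noncomputable def hermite (p q : Polynomial ℝ) :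
    Matrix (Fin p.natDegree) (Fin p.natDegree) ℝ :=
  fun i j => Matrix.trace (Polynomial.aeval (companion p) (q * X ^ ((i : ℕ) + (j : ℕ))))

/-! The companion matrix `M` is cyclic: `Mᵏ e₀ = eₖ` for `k < n`, so a matrix commuting with `M`
is determined by its first column. Applied to `q(M) Mʲ`, whose first column is the `j`-th column of
`q(M)`, this gives `∑ₖ q(M)ₖⱼ Mᵏ = q(M) Mʲ`, and hence
`(H₁ q(M))ᵢⱼ = ∑ₖ tr(Mⁱ⁺ᵏ) q(M)ₖⱼ = tr(Mⁱ q(M) Mʲ) = (H_q)ᵢⱼ`. -/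

theorem Matrix.eq_of_commute_of_mulVec_eq {R n : Type*} [CommSemiring R] [Fintype n]
    [DecidableEq n] {M A B : Matrix n n R} {v : n → R}
    (hv : ∀ j, ∃ k : ℕ, M ^ k *ᵥ v = Pi.single j 1) (hA : Commute A M) (hB : Commute B M)
    (h : A *ᵥ v = B *ᵥ v) : A = B := by
  refine ext_of_mulVec_single fun j => ?_
  obtain ⟨k, hk⟩ := hv j
  rw [← hk, mulVec_mulVec, mulVec_mulVec, (hA.pow_right k).eq, (hB.pow_right k).eq,
    ← mulVec_mulVec, ← mulVec_mulVec, h]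

theorem companion_pow_mulVec_single_zero (p : ℝ[X]) (h0 : 0 < p.natDegree) {k : ℕ}
    (hk : k < p.natDegree) :
    companion p ^ k *ᵥ Pi.single ⟨0, h0⟩ 1 = Pi.single ⟨k, hk⟩ 1 := by
  induction k with
  | zero => rw [pow_zero, one_mulVec]
  | succ k ih =>
    rw [pow_succ', ← mulVec_mulVec, ih (by omega), mulVec_single_one]
    ext i
    have hlast : k + 1 ≠ p.natDegree := by omega
    simp [companion, hlast, Pi.single_apply, Fin.ext_iff]

theorem sum_apply_smul_companion_pow (p s : ℝ[X]) (j : Fin p.natDegree) :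
    ∑ k : Fin p.natDegree, aeval (companion p) s k j • companion p ^ (k : ℕ)
      = aeval (companion p) s * companion p ^ (j : ℕ) := by
  have h0 : 0 < p.natDegree := j.pos
  have hpow (k : Fin p.natDegree) : companion p ^ (k : ℕ) *ᵥ Pi.single ⟨0, h0⟩ 1 = Pi.single k 1 :=
    companion_pow_mulVec_single_zero p h0 k.isLt
  have hcomm : Commute (aeval (companion p) s) (companion p) := by
    simpa using (Commute.all s X).map (aeval (companion p))
  refine eq_of_commute_of_mulVec_eq (fun k => ⟨k, hpow k⟩) ?_
    (hcomm.mul_left ((Commute.refl _).pow_left _)) ?_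
  · exact Commute.sum_left _ _ _ fun k _ => ((Commute.refl _).pow_left _).smul_left _
  · rw [sum_mulVec, ← mulVec_mulVec, hpow j, mulVec_single_one]
    simp only [smul_mulVec, hpow]
    ext k
    simp [Finset.sum_apply, Pi.single_apply]

theorem hermite_apply (p q : ℝ[X]) (i j : Fin p.natDegree) :
    _root_.hermite p q i j = trace (aeval (companion p) q * companion p ^ ((i : ℕ) + j)) := by
  rw [_root_.hermite, map_mul, map_pow, aeval_X]

theorem hermite_mul_qM_general (p q : Polynomial ℝ) :
    hermite p 1 * (Polynomial.aeval (companion p) q) = hermite p q := by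
  ext i j
  set M := companion p with hM
  calc (hermite p 1 * aeval M q) i j
      = ∑ k, trace (M ^ (i : ℕ) * (aeval M q k j • M ^ (k : ℕ))) := by
        simp only [mul_apply, hermite_apply, map_one, one_mul, pow_add, mul_smul_comm, trace_smul,
          smul_eq_mul, mul_comm, ← hM]
    _ = trace (M ^ (i : ℕ) * (aeval M q * M ^ (j : ℕ))) := by
        rw [← trace_sum, ← Finset.mul_sum, sum_apply_smul_companion_pow]
    _ = hermite p q i j := by
        rw [trace_mul_comm, hermite_apply, mul_assoc, ← pow_add, add_comm]

/-- algorithm correctness: For a monic squarefree real polynomial `p`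
with distinct complex roots and any real polynomial `q`, we have
`H₁ · q(M) = H_q` where `M` is the companion matrix of `p`. -/
theorem hermite_mul_qM (n : ℕ) (p q : Polynomial ℝ)
    (hmonic : p.Monic) (hsf : Squarefree p) (hdeg : p.natDegree = n)
    (z : Fin n → ℂ) (hinj : Function.Injective z)
    (hroots : p.map (algebraMap ℝ ℂ) = ∏ i : Fin n, (X - C (z i))) :
    hermite p 1 * (Polynomial.aeval (companion p) q) = hermite p q :=
  hermite_mul_qM_general p q
end

section
/- Let A be a real n×n matrix with squarefree characteristic polynomial p, and for row i set q_i(x) = (x − a_{ii})^2 − R_i^2 where R_i = ∑_{j≠i} |a_{ij}|. If σ(H_{q_i}(p)) = σ(H_1(p)), then A has no real eigenvalue λ with |λ − a_{ii}| ≤ R_i (i.e., no real eigenvalue in the i-th Gershgorin disk). -/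
open Polynomial Matrix

/-!
Let `r₁, …, rₙ` be the distinct complex roots of `p`. The Vandermonde matrix `V = (r_k ^ j)`
diagonalises the companion matrix, so `H_q[i,j] = ∑ₖ q(rₖ) rₖ^(i+j)`. Pair every non-real root
`z` with `z̄` and pick `w` with `w² = q(z)`: the two terms of the pair add up to
`a b + ā b̄ = 2 Re a Re b - 2 Im a Im b` with `a = w zⁱ`, `b = w zʲ`. Hence `H_q = Wᵀ diag(Δ) W`
with a real matrix `W`, where `Δ` is `q(x)` at a real root `x` and `2`, `-2` on a conjugate pair,
and `W` is invertible as soon as `q` does not vanish at the non-real roots. Sylvester's law of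
inertia then gives Hermite's count `σ(H_q) = #{x real : q(x) > 0} - #{x real : q(x) < 0}`.
For `q = 1` this is the number of real roots, while `q = (X - aᵢᵢ)² - Rᵢ²` has only real zeros;
so `σ(H_q) = σ(H_1)` forces `q > 0`, i.e. `|x - aᵢᵢ| > Rᵢ`, at every real root `x`.
-/

open Finset QuadraticMap ComplexConjugate

lemma Fintype.sum_eq_sum_of_involutive {ι M : Type*} [Fintype ι] [AddCommGroup M]
    [IsAddTorsionFree M] {f g : ι → M} {σ : ι → ι} (hσ : Function.Involutive σ)
    (h : ∀ k, f k + f (σ k) = g k + g (σ k)) : ∑ k, f k = ∑ k, g k := by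
  have hsum : ∀ φ : ι → M, ∑ k, (φ k + φ (σ k)) = 2 • ∑ k, φ k := fun φ => by
    rw [sum_add_distrib, two_nsmul]
    congr 1
    exact Equiv.sum_comp (Function.Involutive.toPerm σ hσ) φ
  apply nsmul_right_injective two_ne_zero
  simp only [← hsum, h]

lemma forall_pos_of_card_pos_sub_card_neg_eq {α : Type*} {s : Finset α} {f : α → ℝ}
    (h : (#{x ∈ s | 0 < f x} : ℤ) - #{x ∈ s | f x < 0} = #s) : ∀ x ∈ s, 0 < f x := by
  have := card_filter_le s fun x => 0 < f x
  exact card_filter_eq_iff.mp (by omega)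

section Inertia

variable {ι : Type*} [Fintype ι] [DecidableEq ι]

lemma toQuadraticForm'_transpose_mul_diagonal_mul (W : Matrix ι ι ℝ) (Δ : ι → ℝ) :
    (Wᵀ * diagonal Δ * W).toQuadraticForm' =
      (weightedSumSquares ℝ Δ).comp (Matrix.toLin' W) := by
  ext x
  simp only [Matrix.toQuadraticForm', LinearMap.BilinMap.toQuadraticMap_apply,
    Matrix.toLinearMap₂'_apply', QuadraticMap.comp_apply, weightedSumSquares_apply,
    Matrix.toLin'_apply, smul_eq_mul]
  rw [← mulVec_mulVec, ← mulVec_mulVec, dotProduct_mulVec, vecMul_transpose]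
  simp only [dotProduct, mulVec_diagonal]
  exact sum_congr rfl fun i _ => by ring

lemma toQuadraticForm'_transpose_mul_diagonal_mul_equivalent {W : Matrix ι ι ℝ}
    (hW : IsUnit W.det) (Δ : ι → ℝ) :
    (Wᵀ * diagonal Δ * W).toQuadraticForm'.Equivalent (weightedSumSquares ℝ Δ) := by
  rw [toQuadraticForm'_transpose_mul_diagonal_mul]
  exact ⟨(isometryEquivOfCompLinearEquiv _ (W.toLinearEquiv' (W.invertibleOfIsUnitDet hW))).symm⟩

end Inertia

lemma signature_transpose_mul_diagonal_mul_s9 {m : ℕ} {W : Matrix (Fin m) (Fin m) ℝ}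
    (hW : IsUnit W.det) (Δ : Fin m → ℝ) :
    signature (Wᵀ * diagonal Δ * W) = (#{i | 0 < Δ i} : ℤ) - #{i | Δ i < 0} := by
  have hH : (Wᵀ * diagonal Δ * W).IsHermitian := by
    simp [Matrix.IsHermitian, transpose_mul, mul_assoc]
  set U := (hH.eigenvectorUnitary : Matrix (Fin m) (Fin m) ℝ)
  have hspec : Wᵀ * diagonal Δ * W = Uᵀᵀ * diagonal hH.eigenvalues * Uᵀ := by
    simpa [Unitary.conjStarAlgAut_apply, star_eq_conjTranspose] using hH.spectral_theorem
  have hU : IsUnit Uᵀ.det := by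
    refine isUnit_det_of_left_inverse (B := U) ?_
    simpa [U, star_eq_conjTranspose] using Unitary.coe_mul_star_self hH.eigenvectorUnitary
  have hequiv :=
    (toQuadraticForm'_transpose_mul_diagonal_mul_equivalent hU hH.eigenvalues).symm.trans
      (hspec ▸ toQuadraticForm'_transpose_mul_diagonal_mul_equivalent hW Δ)
  have hpos := QuadraticForm.sigPos_of_equiv_weightedSumSquares hequiv
  have hneg := QuadraticForm.sigNeg_of_equiv_weightedSumSquares hequiv
  rw [QuadraticForm.sigPos_weightedSumSquares] at hpos
  rw [QuadraticForm.sigNeg_weightedSumSquares] at hneg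
  simp only [Set.ncard_eq_toFinset_card', Set.toFinset_ofPred] at hpos hneg
  rw [signature, dif_pos hH, hpos, hneg]

lemma mul_aeval_eq_aeval_mul {R A : Type*} [CommSemiring R] [Semiring A] [Algebra R A]
    {V M D : A} (h : V * M = D * V) (g : R[X]) : V * aeval M g = aeval D g * V := by
  induction g using Polynomial.induction_on' with
  | add f g hf hg => simp only [map_add, mul_add, add_mul, hf, hg]
  | monomial n a =>
    simp only [aeval_monomial, ← mul_assoc, ← Algebra.commutes a V]
    rw [mul_assoc, (SemiconjBy.pow_right h n).eq, mul_assoc]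

section MatrixAeval

variable {R A ι : Type*} [CommSemiring R] [CommSemiring A] [Algebra R A] [Fintype ι]
  [DecidableEq ι]

lemma aeval_diagonal (d : ι → A) (g : R[X]) :
    aeval (diagonal d) g = diagonal fun i => aeval (d i) g := by
  rw [← diagonalAlgHom_apply (R := R), aeval_algHom_apply, diagonalAlgHom_apply, aeval_pi_apply]

lemma algebraMap_trace_aeval (M : Matrix ι ι R) (g : R[X]) :
    algebraMap R A (trace (aeval M g)) = trace (aeval (M.map (algebraMap R A)) g) := by
  have h := aeval_algHom_apply ((Algebra.ofId R A).mapMatrix (m := ι)) M g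
  have hof : ⇑(Algebra.ofId R A) = algebraMap R A := rfl
  simp only [AlgHom.mapMatrix_apply, hof] at h
  rw [h, AddMonoidHom.map_trace]

end MatrixAeval

section Companion

variable {p : ℝ[X]}

lemma Polynomial.Monic.sum_pow_mul_coeff_eq_neg_pow (hp : p.Monic) {z : ℂ}
    (hz : aeval z p = 0) :
    ∑ i : Fin p.natDegree, z ^ (i : ℕ) * (p.coeff i : ℂ) = -z ^ p.natDegree := by
  rw [hp.as_sum] at hz
  simp only [map_add, map_pow, aeval_X, map_sum, map_mul, aeval_C, Complex.coe_algebraMap] at hz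
  rw [Fin.sum_univ_eq_sum_range (fun i => z ^ i * (p.coeff i : ℂ))]
  simp_rw [mul_comm (z ^ _)]
  linear_combination hz

lemma vecMul_companion (hp : p.Monic) {z : ℂ} (hz : aeval z p = 0) :
    (fun i : Fin p.natDegree => z ^ (i : ℕ)) ᵥ* (companion p).map (algebraMap ℝ ℂ) =
      fun j : Fin p.natDegree => z ^ ((j : ℕ) + 1) := by
  ext j
  have hC : ∀ i : Fin p.natDegree, algebraMap ℝ ℂ (companion p i j) =
      (if (i : ℕ) = j + 1 then 1 else 0) +
        (if (j : ℕ) + 1 = p.natDegree then -(p.coeff i : ℂ) else 0) := by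
    intro i
    simp only [companion]
    split_ifs <;> simp
  simp only [vecMul, dotProduct, map_apply, hC, mul_add, sum_add_distrib, mul_ite, mul_one,
    mul_zero]
  by_cases hj : (j : ℕ) + 1 = p.natDegree
  · have hnone : ∀ i : Fin p.natDegree, (i : ℕ) ≠ j + 1 := fun i => by omega
    simp only [hnone, if_false, sum_const_zero]
    simp only [hj, if_true, zero_add, mul_neg, sum_neg_distrib,
      hp.sum_pow_mul_coeff_eq_neg_pow hz, neg_neg]
  · have hj' : ∀ i : Fin p.natDegree, (i : ℕ) = j + 1 ↔ i = ⟨j + 1, by omega⟩ := by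
      simp [Fin.ext_iff]
    simp only [hj, hj', if_false, add_zero, sum_const_zero, sum_ite_eq', mem_univ, if_true]

lemma vandermonde_mul_companion (hp : p.Monic) {r : Fin p.natDegree → ℂ}
    (hr : ∀ k, aeval (r k) p = 0) :
    vandermonde r * (companion p).map (algebraMap ℝ ℂ) = diagonal r * vandermonde r := by
  ext k j
  rw [diagonal_mul]
  simpa [vecMul, dotProduct, mul_apply, pow_succ'] using congrFun (vecMul_companion hp (hr k)) j

lemma algebraMap_trace_aeval_companion (hp : p.Monic) {r : Fin p.natDegree → ℂ}
    (hinj : Function.Injective r) (hr : ∀ k, aeval (r k) p = 0) (g : ℝ[X]) :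
    algebraMap ℝ ℂ (trace (aeval (companion p) g)) = ∑ k, aeval (r k) g := by
  set V := vandermonde r
  have hV : IsUnit V.det := isUnit_iff_ne_zero.mpr (det_vandermonde_ne_zero_iff.mpr hinj)
  have hconj := mul_aeval_eq_aeval_mul (vandermonde_mul_companion hp hr) g
  rw [algebraMap_trace_aeval]
  calc trace (aeval ((companion p).map (algebraMap ℝ ℂ)) g)
      = trace (V⁻¹ * (V * aeval ((companion p).map (algebraMap ℝ ℂ)) g)) := by
        rw [← mul_assoc, nonsing_inv_mul _ hV, one_mul]
    _ = trace (aeval (diagonal r) g * (V * V⁻¹)) := by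
        rw [hconj, trace_mul_comm, mul_assoc]
    _ = ∑ k, aeval (r k) g := by
        rw [mul_nonsing_inv _ hV, mul_one, aeval_diagonal, trace_diagonal]

end Companion

section Roots

variable {p : ℝ[X]} {r : Fin p.natDegree → ℂ}

lemma exists_injective_aeval_eq_zero (hsep : p.Separable) :
    ∃ r : Fin p.natDegree → ℂ, Function.Injective r ∧ ∀ k, aeval (r k) p = 0 := by
  let e := (Fintype.equivFinOfCardEq
    (card_rootSet_eq_natDegree hsep (IsAlgClosed.splits (p.map (algebraMap ℝ ℂ))))).symm
  exact ⟨fun k => e k, Subtype.val_injective.comp e.injective,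
    fun k => (mem_rootSet.mp (e k).2).2⟩

lemma exists_eq_of_aeval_eq_zero (hp : p ≠ 0) (hinj : Function.Injective r)
    (hr : ∀ k, aeval (r k) p = 0) {z : ℂ} (hz : aeval z p = 0) : ∃ k, r k = z := by
  have himage : univ.image r = (p.aroots ℂ).toFinset := by
    refine eq_of_subset_of_card_le (fun w hw => ?_) ?_
    · obtain ⟨k, -, rfl⟩ := mem_image.mp hw
      exact Multiset.mem_toFinset.mpr (mem_aroots.mpr ⟨hp, hr k⟩)
    · rw [card_image_of_injective _ hinj, card_univ, Fintype.card_fin]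
      calc #(p.aroots ℂ).toFinset ≤ (p.aroots ℂ).card := Multiset.toFinset_card_le _
        _ ≤ (p.map (algebraMap ℝ ℂ)).natDegree := card_roots' _
        _ = p.natDegree := natDegree_map _
  have hz' : z ∈ univ.image r := himage ▸ Multiset.mem_toFinset.mpr (mem_aroots.mpr ⟨hp, hz⟩)
  simpa using hz'

lemma exists_involutive_conj_s9 (hp : p ≠ 0) (hinj : Function.Injective r)
    (hr : ∀ k, aeval (r k) p = 0) :
    ∃ c : Fin p.natDegree → Fin p.natDegree, Function.Involutive c ∧ ∀ k, r (c k) = conj (r k) := by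
  choose c hc using fun k => exists_eq_of_aeval_eq_zero hp hinj hr
    (by rw [aeval_conj, hr k, map_zero] : aeval (conj (r k)) p = 0)
  exact ⟨c, fun k => hinj (by rw [hc, hc, Complex.conj_conj]), hc⟩

lemma aeval_ofReal_eq_zero_iff {x : ℝ} : aeval (x : ℂ) p = 0 ↔ p.IsRoot x := by
  rw [← Complex.coe_algebraMap, aeval_algebraMap_apply, coe_aeval_eq_eval]
  simp [IsRoot]

lemma card_filter_im_eq_zero (hp : p ≠ 0) (hinj : Function.Injective r)
    (hr : ∀ k, aeval (r k) p = 0) (P : ℝ → Prop) [DecidablePred P] :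
    #{k | (r k).im = 0 ∧ P (r k).re} = #{x ∈ p.roots.toFinset | P x} := by
  have hreal : ∀ {k}, (r k).im = 0 → ((r k).re : ℂ) = r k := fun h => Complex.ext rfl (by simp [h])
  refine card_bij (fun k _ => (r k).re) (fun k hk => ?_) (fun k hk l hl hkl => ?_) (fun x hx => ?_)
  · simp only [mem_filter, mem_univ, true_and] at hk
    simp only [mem_filter, Multiset.mem_toFinset, mem_roots hp, hk.2, and_true]
    rw [← aeval_ofReal_eq_zero_iff, hreal hk.1, hr k]
  · simp only [mem_filter, mem_univ, true_and] at hk hl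
    exact hinj (by rw [← hreal hk.1, ← hreal hl.1, hkl])
  · simp only [mem_filter, Multiset.mem_toFinset, mem_roots hp] at hx
    obtain ⟨k, hk⟩ := exists_eq_of_aeval_eq_zero hp hinj hr (aeval_ofReal_eq_zero_iff.mpr hx.1)
    exact ⟨k, by simp [hk, hx.2], by simp [hk]⟩

end Roots

lemma card_filter_im_pos_eq_card_filter_im_neg {m : ℕ} {r : Fin m → ℂ} {c : Fin m → Fin m}
    (hc : Function.Involutive c) (hrc : ∀ k, r (c k) = conj (r k)) :
    #{k | 0 < (r k).im} = #{k | (r k).im < 0} := by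
  refine card_nbij' c c (fun k hk => ?_) (fun k hk => ?_) (fun k _ => hc k) (fun k _ => hc k)
  · simpa [hrc] using hk
  · simpa [hrc] using hk

section HermiteForm

variable (q : ℝ[X])

noncomputable def sqrtAeval (z : ℂ) : ℂ := aeval z q ^ (2⁻¹ : ℂ)

lemma sqrtAeval_sq (z : ℂ) : sqrtAeval q z ^ 2 = aeval z q :=
  Complex.cpow_ofNat_inv_pow _ 2

/-- Row of `W` attached to the root `z`. For `Im z < 0` it uses the square root at `z̄`, so that
the rows of `z` and `z̄` are the real and imaginary parts of the same vector `(w zʲ)ⱼ`. -/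
noncomputable def hermiteRow (z : ℂ) (j : ℕ) : ℝ :=
  if z.im = 0 then z.re ^ j
  else if 0 < z.im then (sqrtAeval q z * z ^ j).re
  else (sqrtAeval q (conj z) * conj z ^ j).im

noncomputable def hermiteWeight (z : ℂ) : ℝ :=
  if z.im = 0 then q.eval z.re else if 0 < z.im then 2 else -2

lemma hermiteWeight_pos_iff (z : ℂ) :
    0 < hermiteWeight q z ↔ (z.im = 0 ∧ 0 < q.eval z.re) ∨ 0 < z.im := by
  unfold hermiteWeight
  split_ifs <;> grind

lemma hermiteWeight_neg_iff (z : ℂ) :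
    hermiteWeight q z < 0 ↔ (z.im = 0 ∧ q.eval z.re < 0) ∨ z.im < 0 := by
  unfold hermiteWeight
  split_ifs <;> grind

lemma aeval_add_aeval_conj_of_im_pos {z : ℂ} (hz : 0 < z.im) (i j : ℕ) :
    aeval z (q * X ^ (i + j)) + aeval (conj z) (q * X ^ (i + j)) =
      ((hermiteRow q z i * hermiteWeight q z * hermiteRow q z j : ℝ) : ℂ) +
      ((hermiteRow q (conj z) i * hermiteWeight q (conj z) * hermiteRow q (conj z) j : ℝ) : ℂ) := by
  have hz' : ¬ 0 < -z.im := by linarith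
  have hprod : aeval z (q * X ^ (i + j)) = (sqrtAeval q z * z ^ i) * (sqrtAeval q z * z ^ j) := by
    rw [map_mul, ← sqrtAeval_sq, map_pow, aeval_X]
    ring
  simp only [hermiteRow, hermiteWeight, hz.ne', hz, hz', Complex.conj_im, neg_eq_zero, if_false,
    if_true, Complex.conj_conj]
  rw [aeval_conj, hprod, Complex.add_conj, Complex.mul_re]
  push_cast
  ring

lemma aeval_add_aeval_conj (z : ℂ) (i j : ℕ) :
    aeval z (q * X ^ (i + j)) + aeval (conj z) (q * X ^ (i + j)) =
      ((hermiteRow q z i * hermiteWeight q z * hermiteRow q z j : ℝ) : ℂ) +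
      ((hermiteRow q (conj z) i * hermiteWeight q (conj z) * hermiteRow q (conj z) j : ℝ) : ℂ) := by
  rcases lt_trichotomy z.im 0 with hz | hz | hz
  · have := aeval_add_aeval_conj_of_im_pos q (z := conj z) (by simpa using hz) i j
    rw [Complex.conj_conj] at this
    rwa [add_comm, add_comm (((_ : ℝ)) : ℂ)]
  · have hzr : ((z.re : ℝ) : ℂ) = z := Complex.ext rfl (by simp [hz])
    have hterm : aeval z (q * X ^ (i + j)) = ((z.re ^ i * q.eval z.re * z.re ^ j : ℝ) : ℂ) := by
      calc aeval z (q * X ^ (i + j)) = aeval ((z.re : ℝ) : ℂ) (q * X ^ (i + j)) := by rw [hzr]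
        _ = (((q * X ^ (i + j)).eval z.re : ℝ) : ℂ) := aeval_ofReal (K := ℂ) _ _
        _ = _ := by
          simp only [eval_mul, eval_pow, eval_X, pow_add]
          push_cast
          ring
    simp only [Complex.conj_eq_iff_im.mpr hz, hermiteRow, hermiteWeight, hz, if_true, hterm]
  · exact aeval_add_aeval_conj_of_im_pos q hz i j

noncomputable def hermiteFactor {m : ℕ} (r : Fin m → ℂ) : Matrix (Fin m) (Fin m) ℝ :=
  Matrix.of fun k j => hermiteRow q (r k) j

end HermiteForm

theorem hermite_eq_transpose_mul_diagonal_mul {p : ℝ[X]} (hp : p.Monic)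
    {r : Fin p.natDegree → ℂ} (hinj : Function.Injective r) (hr : ∀ k, aeval (r k) p = 0)
    {c : Fin p.natDegree → Fin p.natDegree} (hc : Function.Involutive c)
    (hrc : ∀ k, r (c k) = conj (r k)) (q : ℝ[X]) :
    hermite p q = (hermiteFactor q r)ᵀ * diagonal (fun k => hermiteWeight q (r k)) *
      hermiteFactor q r := by
  ext i j
  apply Complex.ofReal_injective
  rw [← Complex.coe_algebraMap, _root_.hermite, algebraMap_trace_aeval_companion hp hinj hr,
    mul_assoc, mul_apply]
  simp only [transpose_apply, diagonal_mul, hermiteFactor, of_apply, map_sum]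
  refine Fintype.sum_eq_sum_of_involutive hc fun k => ?_
  rw [hrc]
  simpa [mul_assoc] using aeval_add_aeval_conj q (r k) i j

lemma sum_pow_mul_eq_zero_of_im_pos {q : ℝ[X]} {z : ℂ} (hz : 0 < z.im) (hq : aeval z q ≠ 0)
    {m : ℕ} {v : Fin m → ℝ} (h : ∑ j : Fin m, hermiteRow q z j * v j = 0)
    (h' : ∑ j : Fin m, hermiteRow q (conj z) j * v j = 0) :
    ∑ j : Fin m, z ^ (j : ℕ) * v j = 0 := by
  have hω : sqrtAeval q z ≠ 0 := fun h0 => hq (by rw [← sqrtAeval_sq, h0, zero_pow two_ne_zero])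
  have hz' : ¬ 0 < -z.im := by linarith
  simp only [hermiteRow, hz.ne', hz, hz', Complex.conj_im, neg_eq_zero, if_false, if_true,
    Complex.conj_conj] at h h'
  refine (mul_eq_zero.mp (Complex.ext ?_ ?_)).resolve_left hω
  · simpa [mul_sum, ← mul_assoc, Complex.re_mul_ofReal] using h
  · simpa [mul_sum, ← mul_assoc, Complex.im_mul_ofReal] using h'

lemma sum_pow_mul_eq_zero_of_hermiteRow {q : ℝ[X]} {z : ℂ} (hq : z.im ≠ 0 → aeval z q ≠ 0)
    {m : ℕ} {v : Fin m → ℝ} (h : ∑ j : Fin m, hermiteRow q z j * v j = 0)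
    (h' : ∑ j : Fin m, hermiteRow q (conj z) j * v j = 0) :
    ∑ j : Fin m, z ^ (j : ℕ) * v j = 0 := by
  rcases lt_trichotomy z.im 0 with hz | hz | hz
  · have hq' : aeval (conj z) q ≠ 0 := by
      rw [aeval_conj, _root_.map_ne_zero]
      exact hq hz.ne
    have := sum_pow_mul_eq_zero_of_im_pos (z := conj z) (by simpa using hz) hq' h'
      (by rwa [Complex.conj_conj])
    simpa [map_pow] using congrArg conj this
  · have hzr : ((z.re : ℝ) : ℂ) = z := Complex.ext rfl (by simp [hz])
    simp only [hermiteRow, hz, if_true] at h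
    rw [← hzr]
    exact_mod_cast h
  · exact sum_pow_mul_eq_zero_of_im_pos hz (hq hz.ne') h h'

lemma isUnit_det_hermiteFactor {q : ℝ[X]} {m : ℕ} {r : Fin m → ℂ}
    (hinj : Function.Injective r) {c : Fin m → Fin m} (hrc : ∀ k, r (c k) = conj (r k))
    (hq : ∀ k, (r k).im ≠ 0 → aeval (r k) q ≠ 0) : IsUnit (hermiteFactor q r).det := by
  rw [isUnit_iff_ne_zero]
  intro hdet
  obtain ⟨v, hv0, hv⟩ := exists_mulVec_eq_zero_iff.mpr hdet
  have hrow : ∀ k, ∑ j : Fin m, hermiteRow q (r k) j * v j = 0 := fun k => by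
    simpa [hermiteFactor, mulVec, dotProduct] using congrFun hv k
  have hV : vandermonde r *ᵥ (fun j => (v j : ℂ)) = 0 := funext fun k => by
    simpa [mulVec, dotProduct] using
      sum_pow_mul_eq_zero_of_hermiteRow (hq k) (hrow k) (hrc k ▸ hrow (c k))
  exact det_vandermonde_ne_zero_iff.mpr hinj (exists_mulVec_eq_zero_iff.mp
    ⟨_, fun h0 => hv0 (funext fun j => by simpa using congrFun h0 j), hV⟩)

theorem signature_hermite {p q : ℝ[X]} (hp : p.Monic) (hsep : p.Separable)
    (hq : ∀ z : ℂ, aeval z p = 0 → z.im ≠ 0 → aeval z q ≠ 0) :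
    signature (hermite p q) =
      (#{x ∈ p.roots.toFinset | 0 < q.eval x} : ℤ) - #{x ∈ p.roots.toFinset | q.eval x < 0} := by
  obtain ⟨r, hinj, hr⟩ := exists_injective_aeval_eq_zero hsep
  obtain ⟨c, hc, hrc⟩ := exists_involutive_conj_s9 hp.ne_zero hinj hr
  rw [hermite_eq_transpose_mul_diagonal_mul hp hinj hr hc hrc q,
    signature_transpose_mul_diagonal_mul_s9 (isUnit_det_hermiteFactor hinj hrc fun k => hq _ (hr k))]
  simp only [hermiteWeight_pos_iff, hermiteWeight_neg_iff, filter_or]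
  rw [card_union_of_disjoint (disjoint_filter.mpr fun k _ h1 h2 => by linarith [h1.1]),
    card_union_of_disjoint (disjoint_filter.mpr fun k _ h1 h2 => by linarith [h1.1]),
    card_filter_im_eq_zero hp.ne_zero hinj hr (fun x => 0 < q.eval x),
    card_filter_im_eq_zero hp.ne_zero hinj hr (fun x => q.eval x < 0),
    card_filter_im_pos_eq_card_filter_im_neg hc hrc]
  push_cast
  ring

theorem signature_hermite_one {p : ℝ[X]} (hp : p.Monic) (hsep : p.Separable) :
    signature (hermite p 1) = #p.roots.toFinset := by
  rw [signature_hermite hp hsep (by simp)]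
  simp

lemma im_eq_zero_of_aeval_sq_sub_sq_eq_zero {a b : ℝ} {z : ℂ}
    (hz : aeval z ((X - C a) ^ 2 - C (b ^ 2)) = 0) : z.im = 0 := by
  simp only [map_sub, map_pow, aeval_X, aeval_C, Complex.coe_algebraMap, sub_eq_zero] at hz
  rcases sq_eq_sq_iff_eq_or_eq_neg.mp hz with h | h
  · rw [show z = ((a + b : ℝ) : ℂ) by push_cast; linear_combination h, Complex.ofReal_im]
  · rw [show z = ((a - b : ℝ) : ℂ) by push_cast; linear_combination h, Complex.ofReal_im]

theorem no_real_eigenvalue_in_disk_general (n : ℕ) (A : Matrix (Fin n) (Fin n) ℝ)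
    (hsf : Squarefree A.charpoly) (i : Fin n)
    (R : ℝ)
    (q : Polynomial ℝ) (hq : q = (X - C (A i i)) ^ 2 - C (R ^ 2))
    (hsig : signature (hermite A.charpoly q) = signature (hermite A.charpoly 1)) :
    ∀ x : ℝ, A.charpoly.IsRoot x → ¬ |x - A i i| ≤ R := by
  have hsep : A.charpoly.Separable := PerfectField.separable_iff_squarefree.mpr hsf
  have hq_ne : ∀ z : ℂ, aeval z A.charpoly = 0 → z.im ≠ 0 → aeval z q ≠ 0 :=
    fun z _ hz h0 => hz (im_eq_zero_of_aeval_sq_sub_sq_eq_zero (hq ▸ h0))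
  rw [signature_hermite A.charpoly_monic hsep hq_ne,
    signature_hermite_one A.charpoly_monic hsep] at hsig
  intro x hx hxR
  have hpos := forall_pos_of_card_pos_sub_card_neg_eq hsig x
    (Multiset.mem_toFinset.mpr ((mem_roots A.charpoly_monic.ne_zero).mpr hx))
  have hneg : q.eval x ≤ 0 := by
    rw [hq]
    simp only [eval_sub, eval_pow, eval_X, eval_C, sub_nonpos]
    exact sq_le_sq' (abs_le.mp hxR).1 (abs_le.mp hxR).2
  linarith

/-- for a real matrix `A` with squarefree characteristic polynomial `p`,
if the signatures of `H_{q_i}(p)` and `H_1(p)` coincide for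
`q_i(x) = (x - a_ii)² - R_i²`, then `A` has no real eigenvalue (real root of `p`)
in the `i`-th Gershgorin disk. -/
theorem no_real_eigenvalue_in_disk (n : ℕ) (A : Matrix (Fin n) (Fin n) ℝ)
    (hsf : Squarefree A.charpoly) (i : Fin n)
    (R : ℝ) (hR : R = ∑ j ∈ Finset.univ.erase i, |A i j|)
    (q : Polynomial ℝ) (hq : q = (X - C (A i i)) ^ 2 - C (R ^ 2))
    (hsig : signature (hermite A.charpoly q) = signature (hermite A.charpoly 1)) :
    ∀ x : ℝ, A.charpoly.IsRoot x → ¬ |x - A i i| ≤ R :=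
  no_real_eigenvalue_in_disk_general n A hsf i R q hq hsig
end

section
/- Let A be a real symmetric Hankel matrix of size n (entries depending only on i+j) given by H[i,j] = s_{i+j−2}, where s_k are the power sums of the roots of a squarefree real polynomial p of degree n with r real roots and (n−r)/2 pairs of complex conjugate roots. Then H is congruent over ℝ to a block diagonal matrix with r blocks equal to (1) and (n−r)/2 blocks equal to the 2×2 matrix [[2,0],[0,−2]] up to positive scaling; in particular, σ(H) = r and H is nonsingular. -/
/-!
Over `ℂ` the Hankel matrix is `Vᵀ V` with `V` the Vandermonde matrix of the distinct roots, so
`det H = (det V)² ≠ 0`. The roots are closed under conjugation, and for a pair `w, w̄` with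
`Im w > 0` the two terms `w^i w^j + w̄^i w̄^j = 2 (Re w^i Re w^j - Im w^i Im w^j)` are a real
diagonal form in the coordinates `u_j = Re w^j`, `v_j = Im w̄^j`. This gives a real congruence
`H = Sᵀ D S` with `D` having an entry `1` for each real root and entries `2, -2` for each pair;
`S` is invertible because `H` is. Sylvester's law of inertia (`QuadraticForm.sigPos`) carries the
numbers of positive and negative entries of `D` over to the eigenvalues of `H`.
-/

open Polynomial Matrix

open Finset ComplexConjugate

section Inertia

variable {𝕜 ι : Type*} [Field 𝕜] [Fintype ι] [DecidableEq ι]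

theorem weightedSumSquares_apply_eq_dotProduct (w v : ι → 𝕜) :
    QuadraticMap.weightedSumSquares 𝕜 w v = v ⬝ᵥ diagonal w *ᵥ v := by
  simp only [QuadraticMap.weightedSumSquares_apply, mulVec_diagonal, dotProduct, smul_eq_mul]
  exact Finset.sum_congr rfl fun i _ => by ring

theorem QuadraticMap.equivalent_weightedSumSquares_of_diagonal_eq {a b : ι → 𝕜}
    {M : Matrix ι ι 𝕜} (hM : IsUnit M.det) (h : diagonal a = Mᵀ * diagonal b * M) :
    (weightedSumSquares 𝕜 a).Equivalent (weightedSumSquares 𝕜 b) :=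
  ⟨{ toLinearEquiv := M.toLinearEquiv' (M.invertibleOfIsUnitDet hM)
     map_app' := fun v => by
       change weightedSumSquares 𝕜 b (M *ᵥ v) = _
       rw [weightedSumSquares_apply_eq_dotProduct, weightedSumSquares_apply_eq_dotProduct, h,
         ← mulVec_mulVec, ← mulVec_mulVec, dotProduct_mulVec v, vecMul_transpose] }⟩

variable [LinearOrder 𝕜] [IsStrictOrderedRing 𝕜]

theorem card_pos_eq_and_card_neg_eq_of_diagonal_eq {a b : ι → 𝕜} {M : Matrix ι ι 𝕜}
    (hM : IsUnit M.det) (h : diagonal a = Mᵀ * diagonal b * M) :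
    #{i | 0 < a i} = #{i | 0 < b i} ∧ #{i | a i < 0} = #{i | b i < 0} := by
  have e := QuadraticMap.equivalent_weightedSumSquares_of_diagonal_eq hM h
  have hpos := e.sigPos_eq
  have hneg := e.sigNeg_eq
  simp only [QuadraticForm.sigPos_weightedSumSquares, QuadraticForm.sigNeg_weightedSumSquares,
    Set.ncard_eq_toFinset_card', Set.toFinset_ofPred] at hpos hneg
  exact ⟨hpos, hneg⟩

end Inertia

theorem signature_eq_of_eq_transpose_mul_diagonal_mul {n : ℕ} {A S : Matrix (Fin n) (Fin n) ℝ}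
    {d : Fin n → ℝ} (hS : IsUnit S.det) (h : A = Sᵀ * diagonal d * S) :
    signature A = (#{i | 0 < d i} : ℤ) - #{i | d i < 0} := by
  subst h
  have hA : (Sᵀ * diagonal d * S).IsHermitian := by
    rw [← conjTranspose_eq_transpose_of_trivial]
    exact isHermitian_conjTranspose_mul_mul S (isHermitian_diagonal d)
  set U : Matrix (Fin n) (Fin n) ℝ := (hA.eigenvectorUnitary : Matrix (Fin n) (Fin n) ℝ)
  have hU : IsUnit U.det := (isUnit_iff_isUnit_det U).mp Unitary.isUnit_coe
  have hdiag : diagonal hA.eigenvalues = (S * U)ᵀ * diagonal d * (S * U) := by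
    have hspec : Uᵀ * (Sᵀ * diagonal d * S) * U = diagonal hA.eigenvalues := by
      have := hA.conjStarAlgAut_star_eigenvectorUnitary
      rwa [Unitary.conjStarAlgAut_star_apply, RCLike.ofReal_real_eq_id, Function.id_comp,
        star_eq_conjTranspose, conjTranspose_eq_transpose_of_trivial] at this
    rw [← hspec, transpose_mul]
    simp only [Matrix.mul_assoc]
  obtain ⟨hpos, hneg⟩ :=
    card_pos_eq_and_card_neg_eq_of_diagonal_eq (by rw [det_mul]; exact hS.mul hU) hdiag
  rw [signature, dif_pos hA, hpos, hneg]

noncomputable def realWeight (w : ℂ) : ℝ := if w.im = 0 then 1 else if 0 < w.im then 2 else -2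

noncomputable def realCoord (w : ℂ) (j : ℕ) : ℝ := if w.im < 0 then (w ^ j).im else (w ^ j).re

theorem realWeight_pos_iff (w : ℂ) : 0 < realWeight w ↔ 0 ≤ w.im := by
  unfold realWeight; split_ifs <;> grind

theorem realWeight_neg_iff (w : ℂ) : realWeight w < 0 ↔ w.im < 0 := by
  unfold realWeight; split_ifs <;> grind

theorem realCoord_mul_realWeight_mul_realCoord_add_conj (w : ℂ) (a b : ℕ) :
    realCoord w a * realWeight w * realCoord w b +
      realCoord (conj w) a * realWeight (conj w) * realCoord (conj w) b = 2 * (w ^ (a + b)).re := by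
  rcases lt_trichotomy w.im 0 with hw | hw | hw
  · simp only [realCoord, realWeight, hw, hw.ne, hw.not_gt, ↓reduceIte, Complex.conj_re,
      Complex.conj_im, ← map_pow, Left.neg_neg_iff, neg_eq_zero, Left.neg_pos_iff, mul_neg,
      neg_mul, pow_add, Complex.mul_re]
    ring
  · have hconj : conj w = w := Complex.conj_eq_iff_im.mpr hw
    have him (j : ℕ) : (w ^ j).im = 0 := Complex.conj_eq_iff_im.mp (by rw [map_pow, hconj])
    simp only [realCoord, realWeight, hw, hconj, him, lt_self_iff_false, ↓reduceIte, mul_one,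
      mul_zero, sub_zero, pow_add, Complex.mul_re]
    ring
  · simp only [realCoord, realWeight, hw, hw.ne', hw.not_gt, ↓reduceIte, Complex.conj_im,
      ← map_pow, Left.neg_neg_iff, neg_eq_zero, Left.neg_pos_iff, mul_neg, neg_mul, neg_neg,
      pow_add, Complex.mul_re]
    ring

section ConjClosed

variable {ι : Type*} [Fintype ι] {z : ι → ℂ}

theorem exists_eq_conj_of_map_eq_prod {p : ℝ[X]}
    (h : p.map (algebraMap ℝ ℂ) = ∏ i, (X - C (z i))) (k : ι) : ∃ l, z l = conj (z k) := by
  have haeval (w : ℂ) : aeval w p = ∏ i, (w - z i) := by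
    rw [← eval_map_algebraMap, h, eval_prod]
    simp only [eval_sub, eval_X, eval_C]
  obtain ⟨l, -, hl⟩ : ∃ l ∈ univ, conj (z k) - z l = 0 := by
    rw [← prod_eq_zero_iff, ← haeval, aeval_conj, haeval,
      prod_eq_zero (mem_univ k) (sub_self _), map_zero]
  exact ⟨l, (sub_eq_zero.mp hl).symm⟩

theorem card_roots_eq_card_filter_im_eq_zero {p : ℝ[X]}
    (h : p.map (algebraMap ℝ ℂ) = ∏ i, (X - C (z i))) :
    Multiset.card p.roots = #{k | (z k).im = 0} := by
  classical
  have hroots : (p.map (algebraMap ℝ ℂ)).roots = univ.val.map z := by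
    rw [h, ← roots_multiset_prod_X_sub_C (univ.val.map z), Multiset.map_map]
    rfl
  rw [← Multiset.card_map (algebraMap ℝ ℂ),
    ← filter_roots_map_range_eq_map_roots (algebraMap ℝ ℂ).injective, hroots,
    Multiset.filter_map, Multiset.card_map]
  refine congrArg Multiset.card (Multiset.filter_congr fun k _ => ?_)
  exact ⟨fun ⟨x, hx⟩ => hx ▸ Complex.ofReal_im x,
    fun hk => ⟨(z k).re, Complex.ext rfl hk.symm⟩⟩

theorem sum_conj_comp_eq {M : Type*} [AddCommMonoid M]
    (hz : Function.Injective z) (hconj : ∀ k, ∃ l, z l = conj (z k)) (f : ℂ → M) :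
    ∑ k, f (conj (z k)) = ∑ k, f (z k) := by
  choose σ hσ using hconj
  have hσ_bij : Function.Bijective σ := Finite.injective_iff_bijective.mp fun k l hkl =>
    hz <| (starRingEnd ℂ).injective <| by rw [← hσ, ← hσ, hkl]
  simp only [← hσ]
  exact hσ_bij.sum_comp (f ∘ z)

theorem card_im_neg_eq_card_im_pos (hz : Function.Injective z)
    (hconj : ∀ k, ∃ l, z l = conj (z k)) : #{k | (z k).im < 0} = #{k | 0 < (z k).im} := by
  simpa only [card_filter, Complex.conj_im, Left.neg_neg_iff] using
    (sum_conj_comp_eq hz hconj fun w => if w.im < 0 then 1 else 0).symm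

theorem card_im_nonneg_eq_and_card_im_neg_eq (hz : Function.Injective z)
    (hconj : ∀ k, ∃ l, z l = conj (z k)) :
    #{k | 0 ≤ (z k).im} = #{k | (z k).im = 0} + (Fintype.card ι - #{k | (z k).im = 0}) / 2 ∧
      #{k | (z k).im < 0} = (Fintype.card ι - #{k | (z k).im = 0}) / 2 := by
  have hsplit : #{k | 0 ≤ (z k).im} = #{k | (z k).im = 0} + #{k | 0 < (z k).im} := by
    classical
    rw [← card_union_of_disjoint (disjoint_filter.mpr fun k _ h => h.symm.not_lt), ← filter_or]
    simp only [le_iff_eq_or_lt, eq_comm]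
  have htotal : #{k | 0 ≤ (z k).im} + #{k | (z k).im < 0} = Fintype.card ι := by
    simpa only [not_le, card_univ] using
      card_filter_add_card_filter_not (s := univ) fun k => 0 ≤ (z k).im
  have := card_im_neg_eq_card_im_pos hz hconj
  omega

theorem sum_realCoord_mul_realWeight_mul_realCoord (hz : Function.Injective z)
    (hconj : ∀ k, ∃ l, z l = conj (z k)) (a b : ℕ) :
    ∑ k, realCoord (z k) a * realWeight (z k) * realCoord (z k) b =
      ∑ k, (z k ^ (a + b)).re := by
  have hswap := sum_conj_comp_eq hz hconj fun w => realCoord w a * realWeight w * realCoord w b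
  apply mul_left_cancel₀ (two_ne_zero (α := ℝ))
  rw [two_mul]
  nth_rw 2 [← hswap]
  rw [← sum_add_distrib, mul_sum]
  exact sum_congr rfl fun k _ => realCoord_mul_realWeight_mul_realCoord_add_conj (z k) a b

end ConjClosed

theorem isUnit_det_of_ofReal_eq_sum_pow {n : ℕ} {z : Fin n → ℂ} (hz : Function.Injective z)
    {H : Matrix (Fin n) (Fin n) ℝ}
    (hH : ∀ i j : Fin n, (H i j : ℂ) = ∑ k, z k ^ ((i : ℕ) + (j : ℕ))) :
    IsUnit H.det := by
  have hV : Complex.ofRealHom.mapMatrix H = (vandermonde z)ᵀ * vandermonde z := by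
    ext i j
    rw [RingHom.mapMatrix_apply, map_apply, Complex.ofRealHom_eq_coe, hH,
      vandermonde_transpose_mul_vandermonde]
  have hdet : (H.det : ℂ) = (vandermonde z).det * (vandermonde z).det := by
    rw [← Complex.ofRealHom_eq_coe, RingHom.map_det, hV, det_mul, det_transpose]
  have hV0 : (vandermonde z).det ≠ 0 := det_vandermonde_ne_zero_iff.mpr hz
  exact isUnit_iff_ne_zero.mpr fun h0 =>
    mul_ne_zero hV0 hV0 (by rw [← hdet, h0, Complex.ofReal_zero])

theorem hankel_power_sum_inertia_general (n r : ℕ) (p : Polynomial ℝ)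
    (z : Fin n → ℂ) (hinj : Function.Injective z)
    (hroots : p.map (algebraMap ℝ ℂ) = ∏ i : Fin n, (X - C (z i)))
    (hr : r = Multiset.card p.roots)
    (H : Matrix (Fin n) (Fin n) ℝ)
    (hH : ∀ i j : Fin n, (H i j : ℂ) = ∑ k : Fin n, z k ^ ((i : ℕ) + (j : ℕ))) :
    (∃ S : Matrix (Fin n) (Fin n) ℝ, ∃ d : Fin n → ℝ, IsUnit S.det ∧
      H = Sᵀ * Matrix.diagonal d * S ∧
      (Finset.univ.filter fun i => 0 < d i).card = r + (n - r) / 2 ∧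
      (Finset.univ.filter fun i => d i < 0).card = (n - r) / 2) ∧
    signature H = (r : ℤ) ∧ IsUnit H.det := by
  have hconj := exists_eq_conj_of_map_eq_prod hroots
  set S : Matrix (Fin n) (Fin n) ℝ := of fun k j => realCoord (z k) j
  set d : Fin n → ℝ := fun k => realWeight (z k)
  have hHS : H = Sᵀ * diagonal d * S := by
    ext i j
    have hHij := congrArg Complex.re (hH i j)
    rw [Complex.ofReal_re, Complex.re_sum] at hHij
    rw [hHij, ← sum_realCoord_mul_realWeight_mul_realCoord hinj hconj, mul_apply]
    simp only [mul_diagonal, transpose_apply, of_apply, S, d]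
  have hH_det : IsUnit H.det := isUnit_det_of_ofReal_eq_sum_pow hinj hH
  have hS_det : IsUnit S.det := by
    rw [hHS, det_mul] at hH_det
    exact isUnit_of_mul_isUnit_right hH_det
  have hpos : #{k | 0 < d k} = #{k | 0 ≤ (z k).im} := by
    simp only [d, realWeight_pos_iff]
  have hneg : #{k | d k < 0} = #{k | (z k).im < 0} := by
    simp only [d, realWeight_neg_iff]
  obtain ⟨hnonneg_card, hneg_card⟩ := card_im_nonneg_eq_and_card_im_neg_eq hinj hconj
  rw [Fintype.card_fin, ← card_roots_eq_card_filter_im_eq_zero hroots, ← hr]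
    at hnonneg_card hneg_card
  refine ⟨⟨S, d, hS_det, hHS, hpos.trans hnonneg_card, hneg.trans hneg_card⟩, ?_, hH_det⟩
  rw [signature_eq_of_eq_transpose_mul_diagonal_mul hS_det hHS, hpos, hneg, hnonneg_card, hneg_card]
  push_cast
  ring

/-- the Hankel matrix of power sums `H[i,j] = s_{i+j}` of the roots
of a squarefree real polynomial `p` of degree `n` with `r` real roots is congruent
over `ℝ` to a diagonal matrix with `r + (n-r)/2` positive entries (the `r` blocks
`(1)` and the positive halves of the `(n-r)/2` blocks `diag(2,-2)`, up to positive
scaling) and `(n-r)/2` negative entries; in particular `σ(H) = r` and `H` is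
nonsingular. -/
theorem hankel_power_sum_inertia (n r : ℕ) (p : Polynomial ℝ)
    (hmonic : p.Monic) (hsf : Squarefree p) (hdeg : p.natDegree = n)
    (z : Fin n → ℂ) (hinj : Function.Injective z)
    (hroots : p.map (algebraMap ℝ ℂ) = ∏ i : Fin n, (X - C (z i)))
    (hr : r = Multiset.card p.roots)
    (H : Matrix (Fin n) (Fin n) ℝ)
    (hH : ∀ i j : Fin n, (H i j : ℂ) = ∑ k : Fin n, z k ^ ((i : ℕ) + (j : ℕ))) :
    (∃ S : Matrix (Fin n) (Fin n) ℝ, ∃ d : Fin n → ℝ, IsUnit S.det ∧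
      H = Sᵀ * Matrix.diagonal d * S ∧
      (Finset.univ.filter fun i => 0 < d i).card = r + (n - r) / 2 ∧
      (Finset.univ.filter fun i => d i < 0).card = (n - r) / 2) ∧
    signature H = (r : ℤ) ∧ IsUnit H.det :=
  hankel_power_sum_inertia_general n r p z hinj hroots hr H hH
end
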